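/- The phase point operators are informationally complete: every matrix M : Matrix (ZMod d) (ZMod d) ℂ satisfies M = (1/d) • Σ over u ∈ ZMod d × ZMod d of trace(A_u * M) • A_u. -/

import Mathlib

open Matrix Complex

/-- ω = exp(2πi/d). -/
noncomputable def omegaC (d : ℕ) : ℂ := Complex.exp (2 * Real.pi * Complex.I / d)

/-- The clock matrix `Z`, with `Z x x = ω ^ x.val`. -/
noncomputable def Zmat (d : ℕ) : Matrix (ZMod d) (ZMod d) ℂ :=
  Matrix.diagonal (fun x => omegaC d ^ x.val)

/-- The shift matrix `X`, with `X x y = 1` iff `x = y + 1`. -/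
noncomputable def Xmat (d : ℕ) : Matrix (ZMod d) (ZMod d) ℂ :=
  Matrix.of fun x y => if x = y + 1 then 1 else 0

/-- The Heisenberg–Weyl operator `T_a`. -/
noncomputable def TW (d : ℕ) [NeZero d] (a : ZMod d × ZMod d) : Matrix (ZMod d) (ZMod d) ℂ :=
  omegaC d ^ ((-((2 : ZMod d)⁻¹ * a.1 * a.2)).val) • (Zmat d ^ a.1.val * Xmat d ^ a.2.val)

/-- The phase point operator at the origin, `A_0 = (1/d) • ∑ a, T_a`. -/
noncomputable def Apoint0 (d : ℕ) [NeZero d] : Matrix (ZMod d) (ZMod d) ℂ :=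
  (1 / (d : ℂ)) • ∑ a : ZMod d × ZMod d, TW d a

/-- The phase point operator `A_u = T_u * A_0 * T_uᴴ`. -/
noncomputable def Apoint (d : ℕ) [NeZero d] (u : ZMod d × ZMod d) : Matrix (ZMod d) (ZMod d) ℂ :=
  TW d u * Apoint0 d * (TW d u)ᴴ

/-! Writing `ψ` for the standard additive character of `ZMod d`, the Weyl operator has entries
`T_a x y = [y = x - a₂] ψ (a₁ x - a₁ a₂ / 2)`. Hence `A_0` is the parity operator `x ↦ -x`, and
`A_u x y = [x + y = 2 u₂] ψ (u₁ (x - y))`. Orthogonality of characters, together with the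
invertibility of `2` modulo an odd `d`, gives
`∑ u, A_u p q * A_u x y = d [p = y] [q = x]`, and any family of matrices with this property
recovers every `M` from the traces `tr (A_u M)`. -/

local notation "ψ" => ZMod.stdAddChar

theorem Matrix.smul_eq_sum_trace_mul_smul {ι n R : Type*} [Fintype ι] [Fintype n]
    [DecidableEq n] [CommSemiring R] (A : ι → Matrix n n R) (c : R)
    (hA : ∀ p q x y, ∑ i, A i p q * A i x y = if p = y ∧ q = x then c else 0)
    (M : Matrix n n R) : c • M = ∑ i, (A i * M).trace • A i := by
  ext x y
  calc (c • M) x y = ∑ p, ∑ q, M q p * ∑ i, A i p q * A i x y := by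
        simp [hA, ite_and, mul_comm]
    _ = ∑ i, ∑ p, ∑ q, A i p q * M q p * A i x y := by
        simp only [Finset.mul_sum]
        conv_lhs => enter [2, p]; rw [Finset.sum_comm]
        rw [Finset.sum_comm]
        exact Finset.sum_congr rfl fun i _ => Finset.sum_congr rfl fun p _ =>
          Finset.sum_congr rfl fun q _ => by ring
    _ = (∑ i, (A i * M).trace • A i) x y := by
        simp [sum_apply, trace, mul_apply, Finset.sum_mul]

theorem ZMod.isUnit_two_of_odd {d : ℕ} (hd : Odd d) : IsUnit (2 : ZMod d) := by
  exact_mod_cast (ZMod.isUnit_iff_coprime 2 d).mpr (Nat.coprime_two_left.mpr hd)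

theorem ZMod.isUnit_inv_two_of_odd {d : ℕ} (hd : Odd d) : IsUnit (2⁻¹ : ZMod d) :=
  .of_mul_eq_one 2 (ZMod.inv_mul_of_unit 2 (ZMod.isUnit_two_of_odd hd))

section
variable {d : ℕ} [NeZero d]

lemma omegaC_pow_eq_stdAddChar (n : ℕ) : omegaC d ^ n = ψ (n : ZMod d) := by
  rw [ZMod.stdAddChar_apply, ZMod.toCircle_natCast, omegaC, ← Complex.exp_nat_mul]
  ring_nf

lemma Zmat_pow (k : ℕ) : Zmat d ^ k = diagonal fun x => ψ ((k : ZMod d) * x) := by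
  rw [Zmat, diagonal_pow]
  congr 1
  ext x
  rw [Pi.pow_apply, ← pow_mul, omegaC_pow_eq_stdAddChar]
  push_cast [ZMod.natCast_zmod_val]
  ring_nf

lemma Xmat_pow_apply (k : ℕ) (x y : ZMod d) :
    (Xmat d ^ k) x y = if x = y + k then 1 else 0 := by
  induction k generalizing y with
  | zero => rw [pow_zero, one_apply, Nat.cast_zero, add_zero]
  | succ k ih =>
    rw [pow_succ, mul_apply, Finset.sum_eq_single (y + 1)]
    · rw [ih, Xmat, of_apply, if_pos rfl, mul_one, Nat.cast_succ, add_comm (k : ZMod d),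
        add_assoc]
    · intro z _ hz
      rw [Xmat, of_apply, if_neg hz, mul_zero]
    · simp

lemma TW_apply (a : ZMod d × ZMod d) (x y : ZMod d) :
    TW d a x y = if y = x - a.2 then ψ (a.1 * x - 2⁻¹ * a.1 * a.2) else 0 := by
  rw [TW, Matrix.smul_apply, Zmat_pow, diagonal_mul, Xmat_pow_apply, omegaC_pow_eq_stdAddChar]
  simp only [ZMod.natCast_zmod_val]
  by_cases h : y = x - a.2
  · rw [if_pos (by rw [h, sub_add_cancel]), if_pos h, smul_eq_mul, mul_one,
      ← AddChar.map_add_eq_mul]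
    ring_nf
  · rw [if_neg (fun h' => h (by rw [h', add_sub_cancel_right])), if_neg h, mul_zero, smul_zero]

lemma TW_mul_mul_conjTranspose_apply (u : ZMod d × ZMod d) (A : Matrix (ZMod d) (ZMod d) ℂ)
    (x y : ZMod d) :
    (TW d u * A * (TW d u)ᴴ) x y = ψ (u.1 * (x - y)) * A (x - u.2) (y - u.2) := by
  simp only [mul_apply, conjTranspose_apply, TW_apply, ite_mul, zero_mul, Finset.sum_ite_eq',
    Finset.mem_univ, if_true, apply_ite star, star_zero, mul_ite, mul_zero]
  rw [mul_right_comm, Complex.star_def, ← AddChar.map_neg_eq_conj, ← AddChar.map_add_eq_mul]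
  ring_nf

lemma sum_TW_apply (x y : ZMod d) :
    ∑ a : ZMod d × ZMod d, TW d a x y =
      ∑ a₁ : ZMod d, ψ (a₁ * x - 2⁻¹ * a₁ * (x - y)) := by
  have hshift (a₂ : ZMod d) : y = x - a₂ ↔ a₂ = x - y := by
    constructor <;> rintro rfl <;> ring
  rw [Fintype.sum_prod_type]
  simp only [TW_apply, hshift, Finset.sum_ite_eq', Finset.mem_univ, if_true]

lemma Apoint0_apply (hd : Odd d) (x y : ZMod d) :
    Apoint0 d x y = if x + y = 0 then 1 else 0 := by
  have h2 := ZMod.isUnit_two_of_odd hd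
  have hphase (a₁ : ZMod d) : a₁ * x - 2⁻¹ * a₁ * (x - y) = a₁ * (2⁻¹ * (x + y)) := by
    linear_combination (-(a₁ * x)) * ZMod.mul_inv_of_unit 2 h2
  rw [Apoint0, Matrix.smul_apply, Matrix.sum_apply, sum_TW_apply]
  simp only [hphase, AddChar.sum_mulShift _ (ZMod.isPrimitive_stdAddChar d),
    (ZMod.isUnit_inv_two_of_odd hd).mul_right_eq_zero]
  split_ifs
  · rw [ZMod.card, smul_eq_mul, one_div_mul_cancel (NeZero.ne _)]
  · rw [Nat.cast_zero, smul_zero]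

lemma Apoint_apply (hd : Odd d) (u : ZMod d × ZMod d) (x y : ZMod d) :
    Apoint d u x y = if x + y = 2 * u.2 then ψ (u.1 * (x - y)) else 0 := by
  have hcond : x - u.2 + (y - u.2) = 0 ↔ x + y = 2 * u.2 := by
    rw [← sub_eq_zero (a := x + y)]
    ring_nf
  rw [Apoint, TW_mul_mul_conjTranspose_apply, Apoint0_apply hd, mul_ite, mul_one, mul_zero]
  exact if_congr hcond rfl rfl

lemma sum_Apoint_apply_mul_Apoint_apply (hd : Odd d) (p q x y : ZMod d) :
    ∑ u, Apoint d u p q * Apoint d u x y = if p = y ∧ q = x then (d : ℂ) else 0 := by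
  have h2 := ZMod.isUnit_two_of_odd hd
  have hhalf (a u₂ : ZMod d) : a = 2 * u₂ ↔ u₂ = 2⁻¹ * a := by
    constructor <;> rintro rfl
    · rw [← mul_assoc, ZMod.inv_mul_of_unit 2 h2, one_mul]
    · rw [← mul_assoc, ZMod.mul_inv_of_unit 2 h2, one_mul]
  simp only [Apoint_apply hd, hhalf, Fintype.sum_prod_type, ite_mul, mul_ite, zero_mul, mul_zero,
    Finset.sum_ite_eq', Finset.mem_univ, if_true, ← AddChar.map_add_eq_mul, ← mul_add,
    (ZMod.isUnit_inv_two_of_odd hd).mul_right_inj]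
  by_cases hs : x + y = p + q
  · have hdiag : p - q + (x - y) = 0 ↔ p = y ∧ q = x := by
      constructor
      · intro h
        have hp : p = y := h2.mul_left_cancel (by linear_combination h - hs)
        exact ⟨hp, by linear_combination -hs - hp⟩
      · rintro ⟨rfl, rfl⟩
        ring
    simp only [hs, if_true, AddChar.sum_mulShift _ (ZMod.isPrimitive_stdAddChar d), ZMod.card,
      hdiag, Nat.cast_ite, Nat.cast_zero]
  · have hoff : ¬(p = y ∧ q = x) := by
      rintro ⟨rfl, rfl⟩
      exact hs (add_comm _ _)
    simp only [hs, hoff, if_false, Finset.sum_const_zero]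

end

theorem phase_point_informationally_complete_general (d : ℕ) [NeZero d] (hodd : Odd d)
    (M : Matrix (ZMod d) (ZMod d) ℂ) :
    M = (1 / (d : ℂ)) • ∑ u : ZMod d × ZMod d, (Apoint d u * M).trace • Apoint d u := by
  rw [← Matrix.smul_eq_sum_trace_mul_smul _ _ (sum_Apoint_apply_mul_Apoint_apply hodd), smul_smul,
    one_div_mul_cancel (NeZero.ne _), one_smul]

/-- The phase point operators are informationally complete. -/
theorem phase_point_informationally_complete (d : ℕ) [NeZero d] (hodd : Odd d) (hd : 1 < d)
    (M : Matrix (ZMod d) (ZMod d) ℂ) :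
    M = (1 / (d : ℂ)) • ∑ u : ZMod d × ZMod d, (Apoint d u * M).trace • Apoint d u :=
  phase_point_informationally_complete_general d hodd M
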